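/- arXiv:2406.02006 — 5 statements merged into one kernel-verified Lean document; each statement's English description precedes it below -/
import Mathlib

section
/- (Spectral radius of the 2×2 propagation block.) Let h > 0 and a, b, g, λ be real numbers with λ ≥ 0, and define B := (h/2)(bλ + a), A := h² g λ, C := B² − A. Consider the 2×2 real matrix M with rows (1 − h b λ, h) and (h(a b − g) λ, 1 − a h). Then the characteristic polynomial of M is X² − (2 − 2B) X + (1 − 2B + A). Moreover: if C ≥ 0 then the eigenvalues of M are the real numbers (1 − B) + √C and (1 − B) − √C and the spectral radius of M equals |1 − B| + √C; if C < 0 then the eigenvalues of M are a pair of non-real complex conjugates, 1 − 2B + A > 0, and the spectral radius of M equals √(1 − 2B + A). -/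
/-!
A 2×2 matrix with trace `2p` and determinant `q` has characteristic polynomial
`X² - 2pX + q = (X - p)² - (p² - q)`, so its complex eigenvalues are `p ± √(p² - q)` when the
discriminant `p² - q` is nonnegative and the conjugate pair `p ± i√(q - p²)` otherwise. For the
propagation block `p = 1 - B`, `q = 1 - 2B + A` and `p² - q = C`. In the real case the larger
modulus is `max |p + s| |p - s| = |p| + s`; in the complex case both eigenvalues have modulus
`√(p² + (q - p²)) = √q`.
-/

open Polynomial

namespace Matrix

theorem spectrum_fin_two_eq_pair {K : Type*} [Field K] {N : Matrix (Fin 2) (Fin 2) K}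
    {r₁ r₂ : K} (htr : N.trace = r₁ + r₂) (hdet : N.det = r₁ * r₂) :
    spectrum K N = {r₁, r₂} := by
  ext z
  have hfactor : z ^ 2 - (r₁ + r₂) * z + r₁ * r₂ = (z - r₁) * (z - r₂) := by ring
  simp only [mem_spectrum_iff_isRoot_charpoly, charpoly_fin_two, htr, hdet, IsRoot.def,
    eval_add, eval_sub, eval_mul, eval_pow, eval_C, eval_X, hfactor, mul_eq_zero, sub_eq_zero,
    Set.mem_insert_iff, Set.mem_singleton_iff]

variable {M : Matrix (Fin 2) (Fin 2) ℝ} {p q : ℝ}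

theorem spectrum_map_complex_eq_pair {r₁ r₂ : ℂ} (htr : (M.trace : ℂ) = r₁ + r₂)
    (hdet : (M.det : ℂ) = r₁ * r₂) :
    spectrum ℂ (M.map (algebraMap ℝ ℂ)) = {r₁, r₂} := by
  refine spectrum_fin_two_eq_pair ?_ ?_
  · rw [← AddMonoidHom.map_trace, ← htr]; rfl
  · rw [← hdet]; exact ((algebraMap ℝ ℂ).map_det M).symm

theorem spectrum_map_complex_of_discr_nonneg (htr : M.trace = 2 * p) (hdet : M.det = q)
    (hdisc : 0 ≤ p ^ 2 - q) :
    spectrum ℂ (M.map (algebraMap ℝ ℂ))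
      = {((p + √(p ^ 2 - q) : ℝ) : ℂ), ((p - √(p ^ 2 - q) : ℝ) : ℂ)} := by
  have hsq := Real.sq_sqrt hdisc
  apply spectrum_map_complex_eq_pair
  · rw [htr]; push_cast; ring
  · rw [hdet, ← Complex.ofReal_mul]
    congr 1
    linear_combination hsq

theorem spectrum_map_complex_of_discr_neg (htr : M.trace = 2 * p) (hdet : M.det = q)
    (hdisc : p ^ 2 - q < 0) :
    spectrum ℂ (M.map (algebraMap ℝ ℂ))
      = {(p : ℂ) + (√(q - p ^ 2) : ℝ) * Complex.I,
          starRingEnd ℂ ((p : ℂ) + (√(q - p ^ 2) : ℝ) * Complex.I)} := by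
  have hsq : ((√(q - p ^ 2) : ℝ) : ℂ) ^ 2 = q - p ^ 2 := by
    exact_mod_cast Real.sq_sqrt (by linarith)
  apply spectrum_map_complex_eq_pair
  · simp only [htr, map_add, Complex.conj_ofReal, map_mul, Complex.conj_I]
    push_cast; ring
  · simp only [hdet, map_add, Complex.conj_ofReal, map_mul, Complex.conj_I]
    linear_combination ((√(q - p ^ 2) : ℝ) : ℂ) ^ 2 * Complex.I_sq - hsq

end Matrix

theorem max_abs_add_abs_sub_of_nonneg (p : ℝ) {s : ℝ} (hs : 0 ≤ s) :
    max |p + s| |p - s| = |p| + s := by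
  rcases le_total 0 p with hp | hp
  · rw [abs_of_nonneg hp, abs_of_nonneg (by linarith : 0 ≤ p + s)]
    exact max_eq_left (abs_sub_le_iff.2 ⟨by linarith, by linarith⟩)
  · rw [abs_of_nonpos hp, abs_of_nonpos (by linarith : p - s ≤ 0)]
    exact max_eq_right (abs_le.2 ⟨by linarith, by linarith⟩) |>.trans (by ring)

theorem isGreatest_norm_ofReal_add_sub (p : ℝ) {s : ℝ} (hs : 0 ≤ s) :
    IsGreatest ((‖·‖) '' {((p + s : ℝ) : ℂ), ((p - s : ℝ) : ℂ)}) (|p| + s) := by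
  rw [Set.image_pair, Complex.norm_real, Complex.norm_real, Real.norm_eq_abs, Real.norm_eq_abs,
    ← max_abs_add_abs_sub_of_nonneg p hs]
  exact isGreatest_pair

theorem isGreatest_norm_pair_conj (z : ℂ) :
    IsGreatest ((‖·‖) '' {z, starRingEnd ℂ z}) ‖z‖ := by
  rw [Set.image_pair, Complex.norm_conj, Set.pair_eq_singleton]
  exact isGreatest_singleton

theorem stmt_7_general (h a b g l : ℝ)
    (B A C : ℝ) (hB : B = (h / 2) * (b * l + a)) (hA : A = h ^ 2 * g * l)
    (hC : C = B ^ 2 - A)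
    (M : Matrix (Fin 2) (Fin 2) ℝ)
    (hM : M = !![1 - h * b * l, h; h * (a * b - g) * l, 1 - a * h]) :
    M.charpoly = X ^ 2 - Polynomial.C (2 - 2 * B) * X + Polynomial.C (1 - 2 * B + A)
    ∧ (0 ≤ C →
        spectrum ℂ (M.map (algebraMap ℝ ℂ))
            = {((1 - B + Real.sqrt C : ℝ) : ℂ), ((1 - B - Real.sqrt C : ℝ) : ℂ)}
        ∧ IsGreatest ((fun z : ℂ => ‖z‖) '' spectrum ℂ (M.map (algebraMap ℝ ℂ)))
            (|1 - B| + Real.sqrt C))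
    ∧ (C < 0 →
        (∃ z : ℂ, z.im ≠ 0 ∧
          spectrum ℂ (M.map (algebraMap ℝ ℂ)) = {z, (starRingEnd ℂ) z})
        ∧ 0 < 1 - 2 * B + A
        ∧ IsGreatest ((fun z : ℂ => ‖z‖) '' spectrum ℂ (M.map (algebraMap ℝ ℂ)))
            (Real.sqrt (1 - 2 * B + A))) := by
  have htr : M.trace = 2 * (1 - B) := by rw [hM, Matrix.trace_fin_two_of, hB]; ring
  have hdet : M.det = 1 - 2 * B + A := by rw [hM, Matrix.det_fin_two_of, hB, hA]; ring
  have hdisc : C = (1 - B) ^ 2 - (1 - 2 * B + A) := by rw [hC]; ring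
  refine ⟨?_, fun hC0 => ?_, fun hC0 => ?_⟩
  · rw [Matrix.charpoly_fin_two, htr, hdet, mul_one_sub]
  · rw [hdisc] at hC0 ⊢
    have hspec := Matrix.spectrum_map_complex_of_discr_nonneg htr hdet hC0
    exact ⟨hspec, hspec ▸ isGreatest_norm_ofReal_add_sub _ (Real.sqrt_nonneg _)⟩
  · rw [hdisc] at hC0
    have hspec := Matrix.spectrum_map_complex_of_discr_neg htr hdet hC0
    set s := √(1 - 2 * B + A - (1 - B) ^ 2)
    have hs : 0 < s := Real.sqrt_pos.2 (by linarith)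
    have hs_sq : s ^ 2 = 1 - 2 * B + A - (1 - B) ^ 2 := Real.sq_sqrt (by linarith)
    have hnorm : ‖((1 - B : ℝ) : ℂ) + (s : ℂ) * Complex.I‖ = √(1 - 2 * B + A) := by
      rw [Complex.norm_add_mul_I, hs_sq, add_sub_cancel]
    refine ⟨⟨_, by simpa using hs.ne', hspec⟩, by nlinarith, ?_⟩
    exact hspec ▸ hnorm ▸ isGreatest_norm_pair_conj _

/-- Spectral radius of the 2×2 propagation block. -/
theorem stmt_7 (h a b g l : ℝ) (hh : 0 < h) (hl : 0 ≤ l)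
    (B A C : ℝ) (hB : B = (h / 2) * (b * l + a)) (hA : A = h ^ 2 * g * l)
    (hC : C = B ^ 2 - A)
    (M : Matrix (Fin 2) (Fin 2) ℝ)
    (hM : M = !![1 - h * b * l, h; h * (a * b - g) * l, 1 - a * h]) :
    M.charpoly = X ^ 2 - Polynomial.C (2 - 2 * B) * X + Polynomial.C (1 - 2 * B + A)
    ∧ (0 ≤ C →
        spectrum ℂ (M.map (algebraMap ℝ ℂ))
            = {((1 - B + Real.sqrt C : ℝ) : ℂ), ((1 - B - Real.sqrt C : ℝ) : ℂ)}
        ∧ IsGreatest ((fun z : ℂ => ‖z‖) '' spectrum ℂ (M.map (algebraMap ℝ ℂ)))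
            (|1 - B| + Real.sqrt C))
    ∧ (C < 0 →
        (∃ z : ℂ, z.im ≠ 0 ∧
          spectrum ℂ (M.map (algebraMap ℝ ℂ)) = {z, (starRingEnd ℂ) z})
        ∧ 0 < 1 - 2 * B + A
        ∧ IsGreatest ((fun z : ℂ => ‖z‖) '' spectrum ℂ (M.map (algebraMap ℝ ℂ)))
            (Real.sqrt (1 - 2 * B + A))) :=
  stmt_7_general h a b g l B A C hB hA hC M hM
end

section
/- (Contraction product estimate.) Let α > 0, h > 0, and t₀ > 0 with α h ≤ 2 t₀, and set t_l := t₀ + l h for integers l ≥ 0. Then for all integers 0 ≤ k ≤ K, ∏_{l=k}^{K} (1 − α h/(2 t_l)) ≤ (t_k / t_{K+1})^{α/2}. -/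
lemma stmt_8_key (α h t : ℝ) (hα : 0 < α) (hh : 0 < h) (ht : 0 < t)
    (hle : α * h ≤ 2 * t) :
    1 - α * h / (2 * t) ≤ (t / (t + h)) ^ (α / 2) := by
  have hth : 0 < t + h := by linarith
  have hpos : (0:ℝ) < t / (t + h) := div_pos ht hth
  rw [Real.rpow_def_of_pos hpos]
  have h1 : 1 - α * h / (2 * t) ≤ Real.exp (-(α * h / (2 * t))) := by
    have := Real.add_one_le_exp (-(α * h / (2 * t))); linarith
  refine h1.trans (Real.exp_le_exp.mpr ?_)
  have hlog : Real.log ((t + h) / t) ≤ h / t := by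
    have heq : (t + h) / t = 1 + h / t := by field_simp
    rw [heq]
    have := Real.log_le_sub_one_of_pos (show (0:ℝ) < 1 + h / t by positivity)
    linarith
  have hneg : Real.log (t / (t + h)) = - Real.log ((t + h) / t) := by
    rw [← Real.log_inv]; congr 1; field_simp
  rw [hneg]
  have hα2 : (0:ℝ) ≤ α / 2 := by positivity
  have := mul_le_mul_of_nonneg_left hlog hα2
  have heq2 : α / 2 * (h / t) = α * h / (2 * t) := by ring
  nlinarith

lemma stmt_8_nonneg (α h t : ℝ) (ht : 0 < t) (hle : α * h ≤ 2 * t) :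
    0 ≤ 1 - α * h / (2 * t) := by
  have : α * h / (2 * t) ≤ 1 := by
    rw [div_le_one (by linarith)]; linarith
  linarith

/-- Contraction product estimate. -/
theorem stmt_8 (α h t₀ : ℝ) (hα : 0 < α) (hh : 0 < h) (ht₀ : 0 < t₀)
    (hαh : α * h ≤ 2 * t₀) (k K : ℕ) (hkK : k ≤ K) :
    (∏ l ∈ Finset.Icc k K, (1 - α * h / (2 * (t₀ + l * h))))
      ≤ ((t₀ + k * h) / (t₀ + (K + 1) * h)) ^ (α / 2) := by
  have hT : ∀ l : ℕ, 0 < t₀ + l * h := fun l => by positivity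
  have hle : ∀ l : ℕ, α * h ≤ 2 * (t₀ + l * h) := fun l => by
    have : (0:ℝ) ≤ (l : ℝ) * h := by positivity
    linarith
  induction K with
  | zero =>
    interval_cases k
    simp only [Finset.Icc_self, Finset.prod_singleton]
    have := stmt_8_key α h t₀ hα hh ht₀ hαh
    have heq : t₀ + (0:ℕ) * h = t₀ := by push_cast; ring
    have heq2 : t₀ + ((0:ℕ) + 1 : ℝ) * h = t₀ + h := by push_cast; ring
    rw [heq, heq2]
    exact this
  | succ K ih =>
    rcases Nat.lt_or_ge k (K + 1) with hk | hk
    · have hk' : k ≤ K := Nat.lt_succ_iff.mp hk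
      rw [Finset.prod_Icc_succ_top (Nat.le_succ_of_le hk')]
      have hterm := stmt_8_key α h (t₀ + (K + 1 : ℕ) * h) hα hh (hT (K + 1)) (hle (K + 1))
      have hpn : 0 ≤ 1 - α * h / (2 * (t₀ + ((K + 1 : ℕ) : ℝ) * h)) :=
        stmt_8_nonneg α h _ (hT (K + 1)) (hle (K + 1))
      have hprodn : 0 ≤ ∏ l ∈ Finset.Icc k K, (1 - α * h / (2 * (t₀ + l * h))) :=
        Finset.prod_nonneg fun l _ => stmt_8_nonneg α h _ (hT l) (hle l)
      have hmul := mul_le_mul (ih hk') hterm hpn (by positivity)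
      refine hmul.trans ?_
      rw [← Real.mul_rpow (by positivity) (by positivity)]
      apply le_of_eq
      congr 1
      have h1 : (0:ℝ) < t₀ + ((K:ℝ) + 1) * h := by positivity
      have h2 : (0:ℝ) < t₀ + (((K:ℕ) + 1 : ℕ) : ℝ) * h + h := by positivity
      push_cast
      rw [div_mul_div_comm]
      rw [div_eq_div_iff (by positivity) (by positivity)]
      ring
    · have hkeq : k = K + 1 := le_antisymm hkK hk
      subst hkeq
      simp only [Finset.Icc_self, Finset.prod_singleton]
      have := stmt_8_key α h (t₀ + (K + 1 : ℕ) * h) hα hh (hT (K + 1)) (hle (K + 1))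
      refine this.trans (le_of_eq ?_)
      congr 1
      push_cast
      ring
end

section
/- (Subdifferential of the largest eigenvalue.) For every n×n real symmetric matrix A, the set of symmetric matrices M such that λmax(B) ≥ λmax(A) + tr(M (B − A)) for all n×n real symmetric matrices B equals the convex hull of { z zᵀ : z ∈ ℝⁿ, ‖z‖ = 1, zᵀ A z = λmax(A) }. -/
/-!
Testing the subgradient inequality of `M` at `A` against `B = A ± 1`, `B = 0`, `B = 2 • A` and
`B = A - w wᵀ` gives `tr M = 1`, `tr (M A) = λmax A` and `M ⪰ 0`. In a spectral decomposition
`M = ∑ μₖ vₖ vₖᵀ` the `μₖ` are therefore convex weights, and `∑ μₖ vₖᵀ A vₖ = λmax A` with every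
`vₖᵀ A vₖ ≤ λmax A` forces each `vₖ` with `μₖ ≠ 0` to be a maximizing unit vector. Conversely
`tr (z zᵀ (B - A)) = zᵀ B z - λmax A ≤ λmax B - λmax A` for a maximizing unit `z`, and
subgradients form a convex set.
-/

open Matrix

variable {ι : Type*} [Fintype ι]

theorem Matrix.trace_vecMulVec_mul {R : Type*} [CommSemiring R]
    (x y : ι → R) (C : Matrix ι ι R) : trace (vecMulVec x y * C) = y ⬝ᵥ C *ᵥ x := by
  rw [vecMulVec_mul, trace_vecMulVec, dotProduct_comm, dotProduct_mulVec]

theorem Matrix.dotProduct_self_eq_sum_sq {R : Type*} [Semiring R] (z : ι → R) :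
    z ⬝ᵥ z = ∑ i, z i ^ 2 := by
  simp only [dotProduct, sq]

theorem mem_convexHull_of_sum_smul {R E : Type*} [Field R] [LinearOrder R]
    [IsStrictOrderedRing R] [AddCommGroup E] [Module R E] {s : Set E} (w : ι → R) (z : ι → E)
    (hw₀ : ∀ i, 0 ≤ w i) (hw₁ : ∑ i, w i = 1) (hz : ∀ i, w i ≠ 0 → z i ∈ s) :
    ∑ i, w i • z i ∈ convexHull R s := by
  classical
  have hsub : ∀ i ∈ Finset.univ, w i • z i ≠ 0 → w i ≠ 0 := fun i _ h hw => h (by simp [hw])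
  rw [← Finset.sum_filter_of_ne hsub]
  refine (convex_convexHull R s).sum_mem (fun i _ => hw₀ i) ?_
    fun i hi => subset_convexHull R s (hz i (Finset.mem_filter.mp hi).2)
  rwa [Finset.sum_filter_ne_zero]

namespace Matrix.IsHermitian

variable [DecidableEq ι] {M : Matrix ι ι ℝ}

theorem eq_sum_eigenvalues_smul_vecMulVec (hM : M.IsHermitian) :
    M = ∑ k, hM.eigenvalues k •
      vecMulVec ⇑(hM.eigenvectorBasis k) ⇑(hM.eigenvectorBasis k) := by
  conv_lhs => rw [hM.spectral_theorem]
  ext i j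
  simp only [RCLike.ofReal_real_eq_id, CompTriple.comp_eq, Unitary.conjStarAlgAut_apply,
    mul_apply, eigenvectorUnitary_apply, diagonal_apply, mul_ite, mul_zero, Finset.sum_ite_eq',
    Finset.mem_univ, ↓reduceIte, star_apply, star_trivial, sum_apply, smul_apply,
    vecMulVec_apply, smul_eq_mul]
  exact Finset.sum_congr rfl fun k _ => by ring

theorem sum_sq_eigenvectorBasis (hM : M.IsHermitian) (k : ι) :
    ∑ i, hM.eigenvectorBasis k i ^ 2 = 1 := by
  rw [← EuclideanSpace.real_norm_sq_eq, hM.eigenvectorBasis.norm_eq_one, one_pow]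

end Matrix.IsHermitian

theorem Matrix.PosSemidef.mem_convexHull_vecMulVec [DecidableEq ι] {M A : Matrix ι ι ℝ}
    (hM : M.PosSemidef) (htr : trace M = 1) {c : ℝ}
    (hc : ∀ z : ι → ℝ, ∑ i, z i ^ 2 = 1 → z ⬝ᵥ A *ᵥ z ≤ c) (hMA : trace (M * A) = c) :
    M ∈ convexHull ℝ {N | ∃ z : ι → ℝ, ∑ i, z i ^ 2 = 1 ∧ z ⬝ᵥ A *ᵥ z = c ∧ N = vecMulVec z z} := by
  set μ := hM.1.eigenvalues
  set v := fun k => ⇑(hM.1.eigenvectorBasis k)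
  have hv : ∀ k, ∑ i, v k i ^ 2 = 1 := hM.1.sum_sq_eigenvectorBasis
  have hdecomp : M = ∑ k, μ k • vecMulVec (v k) (v k) := hM.1.eq_sum_eigenvalues_smul_vecMulVec
  have hμ₁ : ∑ k, μ k = 1 := by simpa [htr] using hM.1.trace_eq_sum_eigenvalues.symm
  have hgap : ∑ k, μ k * (c - v k ⬝ᵥ A *ᵥ v k) = 0 := by
    have : trace (M * A) = ∑ k, μ k * (v k ⬝ᵥ A *ᵥ v k) := by
      rw [hdecomp, Finset.sum_mul, trace_sum]
      simp only [smul_mul, trace_smul, trace_vecMulVec_mul, smul_eq_mul]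
    simp only [mul_sub, Finset.sum_sub_distrib, ← Finset.sum_mul, hμ₁, ← this, hMA, one_mul,
      sub_self]
  have hmax (k : ι) (hk : μ k ≠ 0) : v k ⬝ᵥ A *ᵥ v k = c := by
    have := (Finset.sum_eq_zero_iff_of_nonneg fun k _ =>
      mul_nonneg (hM.eigenvalues_nonneg k) (sub_nonneg.mpr (hc _ (hv k)))).mp hgap k
      (Finset.mem_univ k)
    linarith [(mul_eq_zero.mp this).resolve_left hk]
  rw [hdecomp]
  exact mem_convexHull_of_sum_smul μ _ hM.eigenvalues_nonneg hμ₁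
    fun k hk => ⟨v k, hv k, hmax k hk, rfl⟩

def IsMaxRayleighQuotient (lmax : Matrix ι ι ℝ → ℝ) : Prop :=
  ∀ A : Matrix ι ι ℝ, A.IsSymm →
    IsGreatest {r : ℝ | ∃ z : ι → ℝ, ∑ i, z i ^ 2 = 1 ∧ r = z ⬝ᵥ A *ᵥ z} (lmax A)

def IsSymmSubgradient (f : Matrix ι ι ℝ → ℝ) (A M : Matrix ι ι ℝ) : Prop :=
  M.IsSymm ∧ ∀ B : Matrix ι ι ℝ, B.IsSymm → f A + trace (M * (B - A)) ≤ f B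

namespace IsMaxRayleighQuotient

variable {lmax : Matrix ι ι ℝ → ℝ} {A B : Matrix ι ι ℝ}

theorem le (h : IsMaxRayleighQuotient lmax) (hA : A.IsSymm) {z : ι → ℝ} (hz : ∑ i, z i ^ 2 = 1) :
    z ⬝ᵥ A *ᵥ z ≤ lmax A :=
  (h A hA).2 ⟨z, hz, rfl⟩

theorem exists_eq (h : IsMaxRayleighQuotient lmax) (hA : A.IsSymm) :
    ∃ z : ι → ℝ, ∑ i, z i ^ 2 = 1 ∧ lmax A = z ⬝ᵥ A *ᵥ z :=
  (h A hA).1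

theorem apply_le_of_forall_le (h : IsMaxRayleighQuotient lmax) (hA : A.IsSymm) {c : ℝ}
    (hc : ∀ z : ι → ℝ, ∑ i, z i ^ 2 = 1 → z ⬝ᵥ A *ᵥ z ≤ c) : lmax A ≤ c := by
  obtain ⟨z, hz, hzA⟩ := h.exists_eq hA
  exact hzA ▸ hc z hz

theorem apply_eq_of_forall_eq (h : IsMaxRayleighQuotient lmax) (hA : A.IsSymm) (hB : B.IsSymm)
    {c t : ℝ} (hc : 0 ≤ c)
    (hBA : ∀ z : ι → ℝ, ∑ i, z i ^ 2 = 1 → z ⬝ᵥ B *ᵥ z = c * z ⬝ᵥ A *ᵥ z + t) :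
    lmax B = c * lmax A + t := by
  refine le_antisymm (h.apply_le_of_forall_le hB fun z hz => ?_) ?_
  · rw [hBA z hz]
    gcongr
    exact h.le hA hz
  · obtain ⟨z, hz, hzA⟩ := h.exists_eq hA
    rw [hzA, ← hBA z hz]
    exact h.le hB hz

theorem apply_add_smul_one [DecidableEq ι] (h : IsMaxRayleighQuotient lmax) (hA : A.IsSymm)
    (t : ℝ) : lmax (A + t • 1) = lmax A + t := by
  rw [← one_mul (lmax A)]
  refine h.apply_eq_of_forall_eq hA (hA.add (isSymm_one.smul t)) zero_le_one fun z hz => ?_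
  rw [add_mulVec, smul_mulVec, one_mulVec, dotProduct_add, dotProduct_smul, smul_eq_mul,
    one_mul, dotProduct_self_eq_sum_sq, hz, mul_one]

theorem apply_smul (h : IsMaxRayleighQuotient lmax) (hA : A.IsSymm) {c : ℝ} (hc : 0 ≤ c) :
    lmax (c • A) = c * lmax A := by
  refine (h.apply_eq_of_forall_eq hA (hA.smul c) hc fun z _ => ?_).trans (add_zero _)
  rw [smul_mulVec, dotProduct_smul, smul_eq_mul, add_zero]

theorem apply_sub_vecMulVec_self_le (h : IsMaxRayleighQuotient lmax) (hA : A.IsSymm) (w : ι → ℝ) :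
    lmax (A - vecMulVec w w) ≤ lmax A := by
  have hw : (vecMulVec w w).IsSymm := transpose_vecMulVec w w
  refine h.apply_le_of_forall_le (hA.sub hw) fun z hz => ?_
  rw [sub_mulVec, vecMulVec_mulVec, dotProduct_sub, dotProduct_smul, op_smul_eq_mul,
    dotProduct_comm z w]
  nlinarith [h.le hA hz, mul_self_nonneg (w ⬝ᵥ z)]

theorem isSymmSubgradient_vecMulVec (h : IsMaxRayleighQuotient lmax) {z : ι → ℝ}
    (hz : ∑ i, z i ^ 2 = 1) (hzA : z ⬝ᵥ A *ᵥ z = lmax A) :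
    IsSymmSubgradient lmax A (vecMulVec z z) :=
  ⟨transpose_vecMulVec z z, fun B hB => by
    rw [trace_vecMulVec_mul, sub_mulVec, dotProduct_sub, hzA]
    linarith [h.le hB hz]⟩

end IsMaxRayleighQuotient

namespace IsSymmSubgradient

variable {lmax : Matrix ι ι ℝ → ℝ} {A M : Matrix ι ι ℝ}

theorem trace_eq_one [DecidableEq ι] (hM : IsSymmSubgradient lmax A M)
    (h : IsMaxRayleighQuotient lmax) (hA : A.IsSymm) : trace M = 1 := by
  have key (t : ℝ) : t * trace M ≤ t := by
    have := hM.2 _ (hA.add (isSymm_one.smul t))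
    rwa [h.apply_add_smul_one hA, add_sub_cancel_left, Matrix.mul_smul, mul_one, trace_smul,
      smul_eq_mul, add_le_add_iff_left] at this
  linarith [key 1, key (-1)]

theorem trace_mul_eq (hM : IsSymmSubgradient lmax A M) (h : IsMaxRayleighQuotient lmax)
    (hA : A.IsSymm) : trace (M * A) = lmax A := by
  have key {c : ℝ} (hc : 0 ≤ c) : (c - 1) * trace (M * A) ≤ (c - 1) * lmax A := by
    have := hM.2 _ (hA.smul c)
    rw [h.apply_smul hA hc, show c • A - A = (c - 1) • A by rw [sub_smul, one_smul],
      Matrix.mul_smul, trace_smul, smul_eq_mul] at this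
    linarith
  linarith [key le_rfl, key zero_le_two]

theorem posSemidef (hM : IsSymmSubgradient lmax A M) (h : IsMaxRayleighQuotient lmax)
    (hA : A.IsSymm) : M.PosSemidef := by
  refine .of_dotProduct_mulVec_nonneg (isHermitian_iff_isSymm.mpr hM.1) fun w => ?_
  have := hM.2 _ (hA.sub (transpose_vecMulVec w w))
  rw [sub_sub_cancel_left, mul_neg, trace_neg, trace_mul_comm, trace_vecMulVec_mul] at this
  simpa using this.trans (h.apply_sub_vecMulVec_self_le hA w)

end IsSymmSubgradient

theorem convex_setOf_isSymmSubgradient (f : Matrix ι ι ℝ → ℝ) (A : Matrix ι ι ℝ) :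
    Convex ℝ {M | IsSymmSubgradient f A M} := by
  rintro M₁ ⟨hM₁, h₁⟩ M₂ ⟨hM₂, h₂⟩ a b ha hb hab
  refine ⟨(hM₁.smul a).add (hM₂.smul b), fun B hB => ?_⟩
  rw [add_mul, smul_mul, smul_mul, trace_add, trace_smul, trace_smul, smul_eq_mul, smul_eq_mul]
  have hconv (x : ℝ) : x = a * x + b * x := by rw [← add_mul, hab, one_mul]
  linarith [mul_le_mul_of_nonneg_left (h₁ B hB) ha, mul_le_mul_of_nonneg_left (h₂ B hB) hb,
    hconv (f A), hconv (f B)]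

theorem stmt_10_general {n : ℕ}
    (lmax : Matrix (Fin n) (Fin n) ℝ → ℝ)
    (hlmax : ∀ A : Matrix (Fin n) (Fin n) ℝ, A.IsSymm →
      IsGreatest {r : ℝ | ∃ z : Fin n → ℝ, (∑ i, z i ^ 2) = 1 ∧ r = z ⬝ᵥ A.mulVec z}
        (lmax A))
    (A : Matrix (Fin n) (Fin n) ℝ) (hA : A.IsSymm) :
    {M : Matrix (Fin n) (Fin n) ℝ | M.IsSymm ∧
        ∀ B : Matrix (Fin n) (Fin n) ℝ, B.IsSymm →
          lmax A + Matrix.trace (M * (B - A)) ≤ lmax B}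
      = convexHull ℝ {M : Matrix (Fin n) (Fin n) ℝ |
          ∃ z : Fin n → ℝ, (∑ i, z i ^ 2) = 1 ∧ z ⬝ᵥ A.mulVec z = lmax A ∧
            M = Matrix.vecMulVec z z} := by
  have h : IsMaxRayleighQuotient lmax := hlmax
  refine Set.Subset.antisymm (fun M (hM : IsSymmSubgradient lmax A M) => ?_) ?_
  · exact (hM.posSemidef h hA).mem_convexHull_vecMulVec (hM.trace_eq_one h hA)
      (fun z hz => h.le hA hz) (hM.trace_mul_eq h hA)
  · refine convexHull_min ?_ (convex_setOf_isSymmSubgradient lmax A)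
    rintro _ ⟨z, hz, hzA, rfl⟩
    exact h.isSymmSubgradient_vecMulVec hz hzA

/-- Subdifferential of the largest eigenvalue: the subdifferential of the
convex function λmax at a symmetric matrix `A` equals the convex hull of the rank-one
matrices `z zᵀ` built from unit maximizing vectors. -/
theorem stmt_10 {n : ℕ} (hn : 0 < n)
    (lmax : Matrix (Fin n) (Fin n) ℝ → ℝ)
    (hlmax : ∀ A : Matrix (Fin n) (Fin n) ℝ, A.IsSymm →
      IsGreatest {r : ℝ | ∃ z : Fin n → ℝ, (∑ i, z i ^ 2) = 1 ∧ r = z ⬝ᵥ A.mulVec z}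
        (lmax A))
    (A : Matrix (Fin n) (Fin n) ℝ) (hA : A.IsSymm) :
    {M : Matrix (Fin n) (Fin n) ℝ | M.IsSymm ∧
        ∀ B : Matrix (Fin n) (Fin n) ℝ, B.IsSymm →
          lmax A + Matrix.trace (M * (B - A)) ≤ lmax B}
      = convexHull ℝ {M : Matrix (Fin n) (Fin n) ℝ |
          ∃ z : Fin n → ℝ, (∑ i, z i ^ 2) = 1 ∧ z ⬝ᵥ A.mulVec z = lmax A ∧
            M = Matrix.vecMulVec z z} :=
  stmt_10_general lmax hlmax A hA
end

section
/- (Smooth adjoint sensitivity identity.) Fix θ ∈ ℝᵖ and t₀ ≤ t₁. Let ψ : ℝᵐ × ℝ × ℝᵖ → ℝᵐ be continuously differentiable, and let s : ℝ × ℝᵖ → ℝᵐ be twice continuously differentiable with ∂s/∂t(t, θ') = ψ(s(t, θ'), t, θ') for all t ∈ [t₀, t₁] and all θ' in a neighborhood of θ, and with s(t₀, θ') independent of θ'. Let r : [t₀, t₁] → ℝᵐ be continuously differentiable with r'(t) = −(∂ψ/∂s(s(t, θ), t, θ))ᵀ r(t) for all t ∈ [t₀, t₁]. Then r(t₁)ᵀ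 (∂s/∂θ)(t₁, θ) = ∫_{t₀}^{t₁} r(t)ᵀ (∂ψ/∂θ)(s(t, θ), t, θ) dt, an identity of row vectors in ℝᵖ. -/
/-!
Differentiating the flow equation `∂ₜ s = ψ (s, t, θ)` in `θ` and using the symmetry of second
derivatives shows that `v t = ∂s/∂θ (t, θ) u` solves the variational equation
`v' = ∂ψ/∂s · v + ∂ψ/∂θ · u` with `v t₀ = 0`. Against the adjoint equation for `r` the terms in
`∂ψ/∂s` cancel, so `d/dt ⟪r, v⟫ = ⟪r, ∂ψ/∂θ · u⟫`, and the identity is the fundamental theorem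
of calculus.
-/

open MeasureTheory Set Filter Topology
open scoped RealInnerProductSpace

section Adjoint

variable {E : Type*} [NormedAddCommGroup E] [InnerProductSpace ℝ E] [CompleteSpace E]

theorem HasDerivAt.inner_of_adjoint_equation {r v : ℝ → E} {A : E →L[ℝ] E} {b : E} {t : ℝ}
    (hr : HasDerivAt r (-(ContinuousLinearMap.adjoint A) (r t)) t)
    (hv : HasDerivAt v (A (v t) + b) t) :
    HasDerivAt (fun τ => ⟪r τ, v τ⟫) ⟪r t, b⟫ t := by
  have hcancel : ⟪r t, A (v t) + b⟫ + ⟪-(ContinuousLinearMap.adjoint A) (r t), v t⟫ = ⟪r t, b⟫ := by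
    rw [inner_add_right, inner_neg_left, ContinuousLinearMap.adjoint_inner_left]
    ring
  exact hcancel ▸ hr.inner ℝ hv

theorem inner_eq_integral_of_adjoint_equation {t₀ t₁ : ℝ} (ht : t₀ ≤ t₁)
    {A : ℝ → E →L[ℝ] E} {b r v : ℝ → E}
    (hr : ∀ t ∈ Icc t₀ t₁, HasDerivAt r (-(ContinuousLinearMap.adjoint (A t)) (r t)) t)
    (hv : ∀ t ∈ Icc t₀ t₁, HasDerivAt v (A t (v t) + b t) t)
    (hv₀ : v t₀ = 0) (hb : ContinuousOn b (Icc t₀ t₁)) :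
    ⟪r t₁, v t₁⟫ = ∫ t in t₀..t₁, ⟪r t, b t⟫ := by
  have hrc : ContinuousOn r (Icc t₀ t₁) := fun t h => (hr t h).continuousAt.continuousWithinAt
  have hderiv : ∀ t ∈ uIcc t₀ t₁, HasDerivAt (fun τ => ⟪r τ, v τ⟫) ⟪r t, b t⟫ t := by
    rw [uIcc_of_le ht]
    exact fun t h => (hr t h).inner_of_adjoint_equation (hv t h)
  rw [intervalIntegral.integral_eq_sub_of_hasDerivAt hderiv
    ((hrc.inner hb).intervalIntegrable_of_Icc ht), hv₀, inner_zero_right, sub_zero]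

end Adjoint

section PartialDerivatives

variable {E F G : Type*} [NormedAddCommGroup E] [NormedSpace ℝ E] [NormedAddCommGroup F]
  [NormedSpace ℝ F] [NormedAddCommGroup G] [NormedSpace ℝ G]

theorem fderiv_comp_graph_apply {f : E → F → G} {g : F → E} {x : F}
    (hf : DifferentiableAt ℝ (fun q : E × F => f q.1 q.2) (g x, x))
    (hg : DifferentiableAt ℝ g x) (u : F) :
    fderiv ℝ (fun x' => f (g x') x') x u
      = fderiv ℝ (fun y => f y x) (g x) (fderiv ℝ g x u) + fderiv ℝ (fun x' => f (g x) x') x u := by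
  set L := fderiv ℝ (fun q : E × F => f q.1 q.2) (g x, x)
  have hgraph : HasFDerivAt (fun x' => f (g x') x')
      (L.comp ((fderiv ℝ g x).prod (ContinuousLinearMap.id ℝ F))) x :=
    hf.hasFDerivAt.comp (f := fun x' => (g x', x')) x (hg.hasFDerivAt.prodMk (hasFDerivAt_id x))
  have hleft : HasFDerivAt (fun y => f y x) (L.comp (ContinuousLinearMap.inl ℝ E F)) (g x) :=
    hf.hasFDerivAt.comp (f := fun y => (y, x)) (g x) (hasFDerivAt_prodMk_left (g x) x)
  have hright : HasFDerivAt (fun x' => f (g x) x') (L.comp (ContinuousLinearMap.inr ℝ E F)) x :=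
    hf.hasFDerivAt.comp (f := fun x' => (g x, x')) x (hasFDerivAt_prodMk_right (g x) x)
  simp [hgraph.fderiv, hleft.fderiv, hright.fderiv, ← map_add]

/-- Mixed partial derivatives commute: `∂ₜ (∂ₓ f · u) = ∂ₓ (∂ₜ f) · u`. -/
theorem hasDerivAt_fderiv_apply_of_contDiff_two {f : ℝ → F → G}
    (hf : ContDiff ℝ 2 fun q : ℝ × F => f q.1 q.2) (t : ℝ) (x u : F) :
    HasDerivAt (fun τ => fderiv ℝ (f τ) x u) (fderiv ℝ (fun y => deriv (fun τ => f τ y) t) x u) t := by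
  set D := fderiv ℝ fun q : ℝ × F => f q.1 q.2
  have hD : ∀ q, HasFDerivAt (fun q : ℝ × F => f q.1 q.2) (D q) q :=
    fun q => (hf.differentiable (by norm_num) q).hasFDerivAt
  have hD' : HasFDerivAt D (fderiv ℝ D (t, x)) (t, x) :=
    ((hf.fderiv_right (m := 1) (by norm_num)).differentiable one_ne_zero _).hasFDerivAt
  have hpartial_x : ∀ τ, fderiv ℝ (f τ) x = (D (τ, x)).comp (ContinuousLinearMap.inr ℝ ℝ F) :=
    fun τ => ((hD (τ, x)).comp (f := fun y => (τ, y)) x (hasFDerivAt_prodMk_right τ x)).fderiv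
  have hpartial_t : ∀ y, deriv (fun τ => f τ y) t = D (t, y) (1, 0) :=
    fun y => ((hD (t, y)).comp_hasDerivAt (f := fun τ => (τ, y)) t
      ((hasDerivAt_id t).prodMk (hasDerivAt_const t y))).deriv
  have hsymm : fderiv ℝ D (t, x) (0, u) (1, 0) = fderiv ℝ D (t, x) (1, 0) (0, u) :=
    (hf.contDiffAt.isSymmSndFDerivAt (by simp)) _ _
  have hrhs : HasFDerivAt (fun y => D (t, y) (1, 0))
      (((fderiv ℝ D (t, x)).comp (ContinuousLinearMap.inr ℝ ℝ F)).flip (1, 0)) x := by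
    simpa using (hD'.comp (f := fun y => (t, y)) x (hasFDerivAt_prodMk_right t x)).clm_apply
      (hasFDerivAt_const _ x)
  have hlhs : HasDerivAt (fun τ => D (τ, x) (0, u)) (fderiv ℝ D (t, x) (1, 0) (0, u)) t := by
    simpa using (hD'.comp_hasDerivAt (f := fun τ => (τ, x)) t
      ((hasDerivAt_id t).prodMk (hasDerivAt_const t x))).clm_apply
      (hasDerivAt_const t (0, u))
  simp only [hpartial_x, hpartial_t, hrhs.fderiv]
  simpa [hsymm] using hlhs

end PartialDerivatives

theorem hasDerivAt_fderiv_of_flow {E F : Type*} [NormedAddCommGroup E] [NormedSpace ℝ E]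
    [NormedAddCommGroup F] [NormedSpace ℝ F] {ψ : E → ℝ → F → E} {s : ℝ → F → E} {U : Set F}
    {θ : F} {t : ℝ}
    (hψ : Differentiable ℝ fun q : E × ℝ × F => ψ q.1 q.2.1 q.2.2)
    (hs : ContDiff ℝ 2 fun q : ℝ × F => s q.1 q.2) (hU : U ∈ 𝓝 θ)
    (hflow : ∀ θ' ∈ U, HasDerivAt (fun τ => s τ θ') (ψ (s t θ') t θ') t) (u : F) :
    HasDerivAt (fun τ => fderiv ℝ (fun θ' => s τ θ') θ u)
      (fderiv ℝ (fun y => ψ y t θ) (s t θ) (fderiv ℝ (fun θ' => s t θ') θ u)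
        + fderiv ℝ (fun θ' => ψ (s t θ) t θ') θ u) t := by
  have hψ_t : DifferentiableAt ℝ (fun q : E × F => ψ q.1 t q.2) (s t θ, θ) :=
    (hψ _).comp _ (differentiableAt_fst.prodMk ((differentiableAt_const t).prodMk differentiableAt_snd))
  have hs_t : DifferentiableAt ℝ (fun θ' => s t θ') θ :=
    (hs.differentiable (by norm_num) _).comp θ ((differentiableAt_const t).prodMk differentiableAt_id)
  have hderiv : (fun θ' => deriv (fun τ => s τ θ') t) =ᶠ[𝓝 θ] fun θ' => ψ (s t θ') t θ' :=
    eventually_of_mem hU fun θ' h => (hflow θ' h).deriv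
  have := hasDerivAt_fderiv_apply_of_contDiff_two hs t θ u
  rwa [hderiv.fderiv_eq, fderiv_comp_graph_apply (f := fun y θ' => ψ y t θ') hψ_t hs_t] at this

theorem stmt_12_general {m p : ℕ}
    (t₀ t₁ : ℝ) (ht : t₀ ≤ t₁)
    (ψ : EuclideanSpace ℝ (Fin m) → ℝ → EuclideanSpace ℝ (Fin p) → EuclideanSpace ℝ (Fin m))
    (hψ : ContDiff ℝ 1
      (fun q : EuclideanSpace ℝ (Fin m) × ℝ × EuclideanSpace ℝ (Fin p) => ψ q.1 q.2.1 q.2.2))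
    (θ : EuclideanSpace ℝ (Fin p))
    (s : ℝ → EuclideanSpace ℝ (Fin p) → EuclideanSpace ℝ (Fin m))
    (hs : ContDiff ℝ 2 (fun q : ℝ × EuclideanSpace ℝ (Fin p) => s q.1 q.2))
    (U : Set (EuclideanSpace ℝ (Fin p))) (hU : U ∈ nhds θ)
    (hflow : ∀ θ' ∈ U, ∀ t ∈ Icc t₀ t₁,
      HasDerivAt (fun τ => s τ θ') (ψ (s t θ') t θ') t)
    (hinit : ∀ θ' ∈ U, s t₀ θ' = s t₀ θ)
    (r : ℝ → EuclideanSpace ℝ (Fin m))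
    (hr : ∀ t ∈ Icc t₀ t₁, HasDerivAt r
      (-(ContinuousLinearMap.adjoint (fderiv ℝ (fun y => ψ y t θ) (s t θ))) (r t)) t) :
    ∀ u : EuclideanSpace ℝ (Fin p),
      ⟪r t₁, (fderiv ℝ (fun θ' => s t₁ θ') θ) u⟫
        = ∫ t in t₀..t₁, ⟪r t, (fderiv ℝ (fun θ' => ψ (s t θ) t θ') θ) u⟫ := by
  intro u
  have hv₀ : fderiv ℝ (fun θ' => s t₀ θ') θ u = 0 := by
    rw [(eventuallyEq_of_mem hU hinit).fderiv_eq, fderiv_const_apply, zero_apply]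
  have hψθ : ContDiff ℝ 1 fun q : ℝ × EuclideanSpace ℝ (Fin p) => ψ (s q.1 θ) q.1 q.2 :=
    hψ.comp (((hs.of_le one_le_two).comp (contDiff_fst.prodMk contDiff_const)).prodMk
      (contDiff_fst.prodMk contDiff_snd))
  have hb : Continuous fun t => fderiv ℝ (fun θ' => ψ (s t θ) t θ') θ u :=
    ((hψθ.fderiv (f := fun t θ' => ψ (s t θ) t θ') (contDiff_const (n := 0)) le_rfl).continuous).clm_apply continuous_const
  exact inner_eq_integral_of_adjoint_equation ht hr
    (fun t ht => hasDerivAt_fderiv_of_flow (hψ.differentiable one_ne_zero) hs hU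
      (fun θ' h => hflow θ' h t ht) u) hv₀ hb.continuousOn

/-- Smooth adjoint sensitivity identity. -/
theorem stmt_12 {m p : ℕ}
    (t₀ t₁ : ℝ) (ht : t₀ ≤ t₁)
    (ψ : EuclideanSpace ℝ (Fin m) → ℝ → EuclideanSpace ℝ (Fin p) → EuclideanSpace ℝ (Fin m))
    (hψ : ContDiff ℝ 1
      (fun q : EuclideanSpace ℝ (Fin m) × ℝ × EuclideanSpace ℝ (Fin p) => ψ q.1 q.2.1 q.2.2))
    (θ : EuclideanSpace ℝ (Fin p))
    (s : ℝ → EuclideanSpace ℝ (Fin p) → EuclideanSpace ℝ (Fin m))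
    (hs : ContDiff ℝ 2 (fun q : ℝ × EuclideanSpace ℝ (Fin p) => s q.1 q.2))
    (U : Set (EuclideanSpace ℝ (Fin p))) (hU : U ∈ nhds θ) (hθU : θ ∈ U)
    (hflow : ∀ θ' ∈ U, ∀ t ∈ Icc t₀ t₁,
      HasDerivAt (fun τ => s τ θ') (ψ (s t θ') t θ') t)
    (hinit : ∀ θ' ∈ U, s t₀ θ' = s t₀ θ)
    (r : ℝ → EuclideanSpace ℝ (Fin m))
    (hr : ∀ t ∈ Icc t₀ t₁, HasDerivAt r
      (-(ContinuousLinearMap.adjoint (fderiv ℝ (fun y => ψ y t θ) (s t θ))) (r t)) t) :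
    ∀ u : EuclideanSpace ℝ (Fin p),
      ⟪r t₁, (fderiv ℝ (fun θ' => s t₁ θ') θ) u⟫
        = ∫ t in t₀..t₁, ⟪r t, (fderiv ℝ (fun θ' => ψ (s t θ) t θ') θ) u⟫ :=
  stmt_12_general t₀ t₁ ht ψ hψ θ s hs U hU hflow hinit r hr
end

section
/- (Gradient of the stopping time by implicit differentiation.) Let f : ℝⁿ → ℝ be twice continuously differentiable, X : ℝ × ℝᵖ → ℝⁿ continuously differentiable, ε > 0, and T : ℝᵖ → ℝ differentiable with ‖∇f(X(T(θ), θ))‖² = ε² for all θ ∈ ℝᵖ. Fix θ and write X⋆ := X(T(θ), θ). If g(θ) := ⟨∇f(X⋆), ∇²f(X⋆) (∂X/∂t)(T(θ), θ)⟩ ≠ 0, then ∇T(θ) = −(1/g(θ)) · ((∂X/∂θ)(T(θ), θ))ᵀ ∇²f(X⋆) ∇f(X⋆). -/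
/-!
Differentiate the stopping condition `‖∇f (X (T θ') θ')‖² = ε²` in `θ'`. By the chain rule the
derivative of `θ' ↦ X (T θ') θ'` in direction `v` is `dT v • ∂ₜX + ∂_θX v`, so with `H` the
Hessian at `X⋆` we get `dT v * g + ⟪∇f, H (∂_θX v)⟫ = 0`. Symmetry of `H` turns the last term into
`⟪(∂_θX)ᵀ H ∇f, v⟫`, and dividing by `g` identifies the gradient of `T`.
-/

open scoped RealInnerProductSpace
open InnerProductSpace

section

variable {E F : Type*} [NormedAddCommGroup E] [InnerProductSpace ℝ E]
  [NormedAddCommGroup F] [InnerProductSpace ℝ F]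

theorem inner_apply_eq_zero_of_hasFDerivAt_of_norm_sq_eq {φ : E → F} {φ' : E →L[ℝ] F} {x : E}
    (hφ : HasFDerivAt φ φ' x) {c : ℝ} (h : ∀ y, ‖φ y‖ ^ 2 = c) (v : E) :
    ⟪φ x, φ' v⟫ = 0 := by
  have hconst : HasFDerivAt (‖φ ·‖ ^ 2) (0 : E →L[ℝ] ℝ) x := by
    simpa only [h] using hasFDerivAt_const c x
  simpa using congrArg (· v) (hφ.norm_sq.unique hconst)

end

section

variable {E : Type*} [NormedAddCommGroup E] [InnerProductSpace ℝ E] [CompleteSpace E]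
  {f : E → ℝ} {x : E}

theorem DifferentiableAt.hasFDerivAt_gradient (h : DifferentiableAt ℝ (fderiv ℝ f) x) :
    HasFDerivAt (gradient f)
      ((toDual ℝ E).symm.toContinuousLinearEquiv.toContinuousLinearMap ∘L
        fderiv ℝ (fderiv ℝ f) x) x :=
  (toDual ℝ E).symm.toContinuousLinearEquiv.hasFDerivAt.comp x h.hasFDerivAt

theorem inner_fderiv_gradient_apply (h : DifferentiableAt ℝ (fderiv ℝ f) x) (a b : E) :
    ⟪fderiv ℝ (gradient f) x a, b⟫ = fderiv ℝ (fderiv ℝ f) x a b := by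
  rw [h.hasFDerivAt_gradient.fderiv]
  simp [toDual_symm_apply]

theorem ContDiffAt.isSymmetric_fderiv_gradient (hf : ContDiffAt ℝ 2 f x) :
    (fderiv ℝ (gradient f) x : E →ₗ[ℝ] E).IsSymmetric := by
  intro a b
  simp only [ContinuousLinearMap.coe_coe]
  have hd : DifferentiableAt ℝ (fderiv ℝ f) x :=
    (hf.fderiv_right (m := 1) le_rfl).differentiableAt one_ne_zero
  rw [← real_inner_comm a, inner_fderiv_gradient_apply hd, inner_fderiv_gradient_apply hd,
    (hf.isSymmSndFDerivAt (by simp)).eq a b]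

end

section

variable {E F : Type*} [NormedAddCommGroup E] [NormedSpace ℝ E]
  [NormedAddCommGroup F] [NormedSpace ℝ F]

theorem hasFDerivAt_uncurry_comp_prodMk {X : ℝ → E → F} {T : E → ℝ} {θ : E}
    (hX : DifferentiableAt ℝ (fun q : ℝ × E => X q.1 q.2) (T θ, θ))
    (hT : DifferentiableAt ℝ T θ) :
    HasFDerivAt (fun θ' => X (T θ') θ')
      ((fderiv ℝ T θ).smulRight (deriv (fun t => X t θ) (T θ)) + fderiv ℝ (X (T θ)) θ) θ := by
  set G' := fderiv ℝ (fun q : ℝ × E => X q.1 q.2) (T θ, θ)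
  have hG : HasFDerivAt (fun q : ℝ × E => X q.1 q.2) G' (T θ, θ) := hX.hasFDerivAt
  have htime : HasDerivAt (fun t => X t θ) (G' (1, 0)) (T θ) :=
    (hG.comp (f := fun t => (t, θ)) (T θ)
      ((hasFDerivAt_id (T θ)).prodMk (hasFDerivAt_const θ (T θ)))).hasDerivAt
  have hparam : HasFDerivAt (X (T θ)) (G' ∘L (0 : E →L[ℝ] ℝ).prod (.id ℝ E)) θ :=
    hG.comp (f := fun θ' => (T θ, θ')) θ ((hasFDerivAt_const (T θ) θ).prodMk (hasFDerivAt_id θ))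
  refine (hG.comp (f := fun θ' => (T θ', θ')) θ
    (hT.hasFDerivAt.prodMk (hasFDerivAt_id θ))).congr_fderiv ?_
  ext v
  rw [htime.deriv, hparam.fderiv]
  simp only [add_apply, ContinuousLinearMap.smulRight_apply,
    ContinuousLinearMap.comp_apply, ContinuousLinearMap.prod_apply, zero_apply,
    ContinuousLinearMap.id_apply, ← map_smul, ← map_add]
  congr 1
  ext <;> simp

end

section

variable {E F : Type*} [NormedAddCommGroup E] [InnerProductSpace ℝ E] [CompleteSpace E]
  [NormedAddCommGroup F] [InnerProductSpace ℝ F] [CompleteSpace F]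

theorem gradient_eq_smul_adjoint_of_inner {T : E → ℝ} {θ : E} (A : E →L[ℝ] F) (w : F) {g : ℝ}
    (hg : g ≠ 0) (h : ∀ v, fderiv ℝ T θ v * g + ⟪w, A v⟫ = 0) :
    gradient T θ = (-(1 / g)) • ContinuousLinearMap.adjoint A w := by
  refine ext_inner_right ℝ fun v => ?_
  rw [inner_gradient_left, real_inner_smul_left, ContinuousLinearMap.adjoint_inner_left]
  field_simp
  linarith [h v]

end

theorem stmt_13_general {n p : ℕ}
    (f : EuclideanSpace ℝ (Fin n) → ℝ) (hf : ContDiff ℝ 2 f)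
    (X : ℝ → EuclideanSpace ℝ (Fin p) → EuclideanSpace ℝ (Fin n))
    (hX : ContDiff ℝ 1 (fun q : ℝ × EuclideanSpace ℝ (Fin p) => X q.1 q.2))
    (ε : ℝ)
    (T : EuclideanSpace ℝ (Fin p) → ℝ) (hT : Differentiable ℝ T)
    (hstop : ∀ θ' : EuclideanSpace ℝ (Fin p), ‖gradient f (X (T θ') θ')‖ ^ 2 = ε ^ 2)
    (θ : EuclideanSpace ℝ (Fin p))
    (Xstar : EuclideanSpace ℝ (Fin n)) (hXstar : Xstar = X (T θ) θ)
    (g : ℝ)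
    (hg : g = ⟪gradient f Xstar,
      (fderiv ℝ (gradient f) Xstar) (deriv (fun t => X t θ) (T θ))⟫)
    (hgne : g ≠ 0) :
    gradient T θ = (-(1 / g)) •
      (ContinuousLinearMap.adjoint (fderiv ℝ (fun θ' => X (T θ) θ') θ))
        ((fderiv ℝ (gradient f) Xstar) (gradient f Xstar)) := by
  subst hXstar hg
  have hgrad : HasFDerivAt (gradient f) (fderiv ℝ (gradient f) (X (T θ) θ)) (X (T θ) θ) :=
    ((hf.fderiv_right (m := 1) le_rfl).differentiable one_ne_zero _).hasFDerivAt_gradient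
      |>.differentiableAt.hasFDerivAt
  have hstopped := hgrad.comp (f := fun θ' => X (T θ') θ') θ
    (hasFDerivAt_uncurry_comp_prodMk (hX.differentiable one_ne_zero _) (hT θ))
  refine gradient_eq_smul_adjoint_of_inner _ _ hgne fun v => ?_
  have horth := inner_apply_eq_zero_of_hasFDerivAt_of_norm_sq_eq hstopped hstop v
  have hsymm := (hf.contDiffAt (x := X (T θ) θ)).isSymmetric_fderiv_gradient
    (gradient f (X (T θ) θ)) (fderiv ℝ (X (T θ)) θ v)
  rw [ContinuousLinearMap.coe_coe] at hsymm
  rw [hsymm]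
  simpa only [ContinuousLinearMap.comp_apply, add_apply, ContinuousLinearMap.smulRight_apply,
    map_add, map_smul, inner_add_right, inner_smul_right, Function.comp_apply] using horth

/-- Gradient of the stopping time by implicit differentiation. -/
theorem stmt_13 {n p : ℕ}
    (f : EuclideanSpace ℝ (Fin n) → ℝ) (hf : ContDiff ℝ 2 f)
    (X : ℝ → EuclideanSpace ℝ (Fin p) → EuclideanSpace ℝ (Fin n))
    (hX : ContDiff ℝ 1 (fun q : ℝ × EuclideanSpace ℝ (Fin p) => X q.1 q.2))
    (ε : ℝ) (hε : 0 < ε)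
    (T : EuclideanSpace ℝ (Fin p) → ℝ) (hT : Differentiable ℝ T)
    (hstop : ∀ θ' : EuclideanSpace ℝ (Fin p), ‖gradient f (X (T θ') θ')‖ ^ 2 = ε ^ 2)
    (θ : EuclideanSpace ℝ (Fin p))
    (Xstar : EuclideanSpace ℝ (Fin n)) (hXstar : Xstar = X (T θ) θ)
    (g : ℝ)
    (hg : g = ⟪gradient f Xstar,
      (fderiv ℝ (gradient f) Xstar) (deriv (fun t => X t θ) (T θ))⟫)
    (hgne : g ≠ 0) :
    gradient T θ = (-(1 / g)) •
      (ContinuousLinearMap.adjoint (fderiv ℝ (fun θ' => X (T θ) θ') θ))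
        ((fderiv ℝ (gradient f) Xstar) (gradient f Xstar)) :=
  stmt_13_general f hf X hX ε T hT hstop θ Xstar hXstar g hg hgne
end
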